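/- arXiv:0904.3567 — 3 statements merged into one kernel-verified Lean document; each statement's English description precedes it below -/
import Mathlib

section
/- Let ν > 1/2 and β > −1/2. Then for every r > 0 the improper integrals below converge and ∫_r^∞ J_ν(t)/t^β dt = J_{ν−1}(r)/r^β + (ν − β − 1) ∫_r^∞ J_{ν−1}(t)/t^{β+1} dt. -/
open MeasureTheory Real Set Filter intervalIntegral

/-- The Bessel function of the first kind `J_μ` (for `μ > −1/2`), defined via Poisson's
integral representation. -/
noncomputable def besselJ (μ : ℝ) (ρ : ℝ) : ℝ :=
  (ρ / 2) ^ μ / (Real.Gamma (1 / 2) * Real.Gamma (μ + 1 / 2)) *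
    ∫ t in (-1 : ℝ)..1, Real.cos (ρ * t) * (1 - t ^ 2) ^ (μ - 1 / 2)

noncomputable def bslP (l ρ : ℝ) : ℝ := ∫ t in (-1:ℝ)..1, Real.cos (ρ * t) * (1 - t^2) ^ l
noncomputable def bslQ (l ρ : ℝ) : ℝ := ∫ t in (-1:ℝ)..1, t * Real.sin (ρ * t) * (1 - t^2) ^ l
noncomputable def bslR (l ρ : ℝ) : ℝ := ∫ t in (-1:ℝ)..1, t^2 * Real.cos (ρ * t) * (1 - t^2) ^ l
noncomputable def bslK (μ : ℝ) : ℝ :=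
  ((2:ℝ)^μ * (Real.Gamma (1/2) * Real.Gamma (μ + 1/2)))⁻¹

section bslAux
variable {l : ℝ}

lemma bw_meas (l : ℝ) : Measurable (fun t : ℝ => (1 - t^2) ^ l) := by
  measurability

lemma bw_nonneg (l t : ℝ) (ht : t ∈ Set.Icc (-1:ℝ) 1) : 0 ≤ (1 - t^2) ^ l := by
  apply Real.rpow_nonneg
  nlinarith [ht.1, ht.2]

lemma integrableOn_one_sub (hl : -1 < l) :
    IntegrableOn (fun t : ℝ => (1 - t) ^ l) (Set.Ioo (-1:ℝ) 1) := by
  have := (intervalIntegrable_rpow' (a := 0) (b := 2) hl).comp_sub_left 1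
  rw [intervalIntegrable_iff] at this
  refine this.mono_set ?_
  rw [uIoc_comm, uIoc_of_le (by norm_num)]
  norm_num
  exact Ioo_subset_Ioc_self

lemma integrableOn_one_add (hl : -1 < l) :
    IntegrableOn (fun t : ℝ => (1 + t) ^ l) (Set.Ioo (-1:ℝ) 1) := by
  have := (intervalIntegrable_rpow' (a := 0) (b := 2) hl).comp_add_right 1
  rw [intervalIntegrable_iff] at this
  simp only [add_comm _ (1:ℝ)] at this
  refine this.mono_set ?_
  rw [uIoc_of_le (by norm_num)]
  norm_num
  exact Ioo_subset_Ioc_self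

lemma integrableOn_bw (hl : -1 < l) :
    IntegrableOn (fun t : ℝ => (1 - t^2) ^ l) (Set.Ioo (-1:ℝ) 1) := by
  rcases le_or_gt 0 l with h0 | h0
  · refine ((integrableOn_const_iff (C := (1:ℝ))).2 (Or.inr measure_Ioo_lt_top)).mono'
      ((bw_meas l).aestronglyMeasurable) ?_
    filter_upwards [ae_restrict_mem measurableSet_Ioo] with t ht
    rw [Real.norm_eq_abs, abs_of_nonneg (bw_nonneg l t (Ioo_subset_Icc_self ht))]
    apply Real.rpow_le_one (by nlinarith [ht.1, ht.2]) (by nlinarith [ht.1, ht.2]) h0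
  · refine ((integrableOn_one_sub hl).add (integrableOn_one_add hl)).mono'
      ((bw_meas l).aestronglyMeasurable) ?_
    filter_upwards [ae_restrict_mem measurableSet_Ioo] with t ht
    rw [Real.norm_eq_abs, abs_of_nonneg (bw_nonneg l t (Ioo_subset_Icc_self ht))]
    have h1t : (0:ℝ) < 1 - t := by linarith [ht.2]
    have h2t : (0:ℝ) < 1 + t := by linarith [ht.1]
    have key : (1 - t^2 : ℝ) ^ l = (1-t)^l * (1+t)^l := by
      rw [← Real.mul_rpow h1t.le h2t.le]; ring_nf
    rw [key]
    simp only [Pi.add_apply]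
    rcases le_or_gt 0 t with h | h
    · have : (1+t:ℝ)^l ≤ 1 :=
        Real.rpow_le_one_of_one_le_of_nonpos (by linarith) h0.le
      nlinarith [Real.rpow_nonneg h1t.le l, Real.rpow_nonneg h2t.le l]
    · have : (1-t:ℝ)^l ≤ 1 :=
        Real.rpow_le_one_of_one_le_of_nonpos (by linarith) h0.le
      nlinarith [Real.rpow_nonneg h1t.le l, Real.rpow_nonneg h2t.le l]

lemma intervalIntegrable_bw (hl : -1 < l) :
    IntervalIntegrable (fun t : ℝ => (1 - t^2) ^ l) volume (-1) 1 := by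
  rw [intervalIntegrable_iff, uIoc_of_le (by norm_num)]
  rw [integrableOn_Ioc_iff_integrableOn_Ioo]
  exact integrableOn_bw hl

lemma intervalIntegrable_mul_bw (hl : -1 < l) {φ : ℝ → ℝ} (hφ : Measurable φ)
    (hb : ∀ t ∈ Set.Icc (-1:ℝ) 1, |φ t| ≤ 1) :
    IntervalIntegrable (fun t => φ t * (1 - t^2) ^ l) volume (-1) 1 := by
  have hi := intervalIntegrable_bw hl
  rw [intervalIntegrable_iff, uIoc_of_le (by norm_num : (-1:ℝ) ≤ 1)] at hi ⊢
  refine hi.mono' ((hφ.mul (bw_meas l)).aestronglyMeasurable) ?_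
  filter_upwards [ae_restrict_mem measurableSet_Ioc] with t ht
  have ht' : t ∈ Set.Icc (-1:ℝ) 1 := ⟨ht.1.le, ht.2⟩
  rw [Real.norm_eq_abs, abs_mul, abs_of_nonneg (bw_nonneg l t ht')]
  nlinarith [hb t ht', bw_nonneg l t ht', abs_nonneg (φ t)]

lemma uIoc_mem_Icc {t : ℝ} (ht : t ∈ Set.uIoc (-1:ℝ) 1) : t ∈ Set.Icc (-1:ℝ) 1 := by
  rw [Set.uIoc_of_le (by norm_num : (-1:ℝ) ≤ 1)] at ht
  exact ⟨ht.1.le, ht.2⟩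

lemma hasDerivAt_bslP (hl : -1 < l) (ρ : ℝ) : HasDerivAt (bslP l) (-(bslQ l ρ)) ρ := by
  have key := intervalIntegral.hasDerivAt_integral_of_dominated_loc_of_deriv_le
    (F := fun x t => Real.cos (x * t) * (1 - t^2) ^ l)
    (F' := fun x t => -Real.sin (x * t) * t * (1 - t^2) ^ l)
    (bound := fun t => (1 - t^2) ^ l) (a := -1) (b := 1) (x₀ := ρ) (μ := volume)
    (Metric.ball_mem_nhds ρ one_pos)
    (Filter.Eventually.of_forall fun x =>
      (((Real.measurable_cos.comp (measurable_const.mul measurable_id)).mul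
        (bw_meas l)).aestronglyMeasurable))
    (intervalIntegrable_mul_bw hl
      (Real.measurable_cos.comp (measurable_const.mul measurable_id))
      (fun t _ => abs_cos_le_one _))
    (((Real.measurable_sin.comp (measurable_const.mul measurable_id)).neg.mul
        measurable_id |>.mul (bw_meas l)).aestronglyMeasurable)
    (Filter.Eventually.of_forall fun t ht x _ => by
      have ht' := uIoc_mem_Icc ht
      simp only [Real.norm_eq_abs]
      rw [abs_mul, abs_of_nonneg (bw_nonneg l t ht')]
      have h2 : |t| ≤ 1 := abs_le.2 ⟨ht'.1, ht'.2⟩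
      have h3 := abs_sin_le_one (x*t)
      have h4 : |(-Real.sin (x*t)) * t| ≤ 1 := by
        rw [abs_mul, abs_neg]
        nlinarith [abs_nonneg (Real.sin (x*t)), abs_nonneg t]
      nlinarith [bw_nonneg l t ht', abs_nonneg ((-Real.sin (x*t)) * t)])
    (intervalIntegrable_bw hl)
    (Filter.Eventually.of_forall fun t ht x _ =>
      ((hasDerivAt_mul_const t).cos.mul_const _))
  have h5 : (∫ t in (-1:ℝ)..1, -Real.sin (ρ*t) * t * (1-t^2)^l) = -(bslQ l ρ) := by
    rw [bslQ, ← intervalIntegral.integral_neg]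
    apply intervalIntegral.integral_congr
    intro t _
    ring
  exact h5 ▸ key.2

lemma hasDerivAt_bslQ (hl : -1 < l) (ρ : ℝ) : HasDerivAt (bslQ l) (bslR l ρ) ρ := by
  have key := intervalIntegral.hasDerivAt_integral_of_dominated_loc_of_deriv_le
    (F := fun x t => t * Real.sin (x * t) * (1 - t^2) ^ l)
    (F' := fun x t => t * (Real.cos (x * t) * t) * (1 - t^2) ^ l)
    (bound := fun t => (1 - t^2) ^ l) (a := -1) (b := 1) (x₀ := ρ) (μ := volume)
    (Metric.ball_mem_nhds ρ one_pos)
    (Filter.Eventually.of_forall fun x =>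
      (((measurable_id.mul (Real.measurable_sin.comp (measurable_const.mul measurable_id))).mul
        (bw_meas l)).aestronglyMeasurable))
    (intervalIntegrable_mul_bw hl
      (measurable_id.mul (Real.measurable_sin.comp (measurable_const.mul measurable_id)))
      (fun t ht => by
        have h2 : |t| ≤ 1 := abs_le.2 ⟨ht.1, ht.2⟩
        rw [abs_mul]
        nlinarith [abs_sin_le_one (ρ*t), abs_nonneg t, abs_nonneg (Real.sin (ρ*t))]))
    (((measurable_id.mul ((Real.measurable_cos.comp (measurable_const.mul measurable_id)).mul
        measurable_id)).mul (bw_meas l)).aestronglyMeasurable)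
    (Filter.Eventually.of_forall fun t ht x _ => by
      have ht' := uIoc_mem_Icc ht
      simp only [Real.norm_eq_abs]
      rw [abs_mul, abs_of_nonneg (bw_nonneg l t ht')]
      have h2 : |t| ≤ 1 := abs_le.2 ⟨ht'.1, ht'.2⟩
      have h3 := abs_cos_le_one (x*t)
      have h4 : |t * (Real.cos (x*t) * t)| ≤ 1 := by
        rw [abs_mul, abs_mul]
        have h5 : |Real.cos (x*t)| * |t| ≤ 1 := by
          nlinarith [abs_nonneg (Real.cos (x*t)), abs_nonneg t]
        nlinarith [abs_nonneg t, mul_nonneg (abs_nonneg (Real.cos (x*t))) (abs_nonneg t)]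
      nlinarith [bw_nonneg l t ht', abs_nonneg (t * (Real.cos (x*t) * t))])
    (intervalIntegrable_bw hl)
    (Filter.Eventually.of_forall fun t ht x _ =>
      (((hasDerivAt_mul_const t).sin.const_mul t).mul_const _))
  have h5 : (∫ t in (-1:ℝ)..1, t * (Real.cos (ρ*t) * t) * (1-t^2)^l) = bslR l ρ := by
    rw [bslR]
    apply intervalIntegral.integral_congr
    intro t _
    ring
  exact h5 ▸ key.2

lemma intervalIntegrable_cos_bw (hl : -1 < l) (ρ : ℝ) :
    IntervalIntegrable (fun t => Real.cos (ρ*t) * (1 - t^2) ^ l) volume (-1) 1 :=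
  intervalIntegrable_mul_bw hl
    (Real.measurable_cos.comp (measurable_const.mul measurable_id))
    (fun t _ => abs_cos_le_one _)

lemma intervalIntegrable_tsin_bw (hl : -1 < l) (ρ : ℝ) :
    IntervalIntegrable (fun t => t * Real.sin (ρ*t) * (1 - t^2) ^ l) volume (-1) 1 :=
  intervalIntegrable_mul_bw hl
    (measurable_id.mul (Real.measurable_sin.comp (measurable_const.mul measurable_id)))
    (fun t ht => by
      rw [abs_mul]
      have h2 : |t| ≤ 1 := abs_le.2 ⟨ht.1, ht.2⟩
      nlinarith [abs_sin_le_one (ρ*t), abs_nonneg t, abs_nonneg (Real.sin (ρ*t))])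

lemma intervalIntegrable_t2cos_bw (hl : -1 < l) (ρ : ℝ) :
    IntervalIntegrable (fun t => t^2 * Real.cos (ρ*t) * (1 - t^2) ^ l) volume (-1) 1 :=
  intervalIntegrable_mul_bw hl
    ((measurable_id.pow_const 2).mul (Real.measurable_cos.comp (measurable_const.mul measurable_id)))
    (fun t ht => by
      rw [abs_mul]
      have h2 : |t| ≤ 1 := abs_le.2 ⟨ht.1, ht.2⟩
      have h5 : |t^2| ≤ 1 := by rw [abs_pow]; nlinarith [abs_nonneg t]
      nlinarith [abs_cos_le_one (ρ*t), abs_nonneg (t^2), abs_nonneg (Real.cos (ρ*t))])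

lemma bw_cont (p : ℝ) (hp : 0 < p) : Continuous (fun t : ℝ => (1 - t^2) ^ p) := by
  rw [continuous_iff_continuousAt]
  intro t
  exact (Real.continuousAt_rpow_const _ _ (Or.inr hp.le)).comp
    (by fun_prop : ContinuousAt (fun t : ℝ => 1 - t^2) t)

lemma bslIbp (hl : -1 < l) (ρ : ℝ) : ρ * bslP (l+1) ρ = (2*l+2) * bslQ l ρ := by
  have hl1 : (0:ℝ) < l + 1 := by linarith
  set h : ℝ → ℝ := fun t => Real.sin (ρ*t) * (1 - t^2) ^ (l+1) with hh
  have hderiv : ∀ t ∈ Set.Ioo (-1:ℝ) 1, HasDerivAt h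
      (ρ * (Real.cos (ρ*t) * (1 - t^2)^(l+1)) - (2*l+2) * (t * Real.sin (ρ*t) * (1 - t^2)^l)) t := by
    intro t ht
    have hb : (0:ℝ) < 1 - t^2 := by nlinarith [ht.1, ht.2]
    have h1 : HasDerivAt (fun t => Real.sin (ρ*t)) (Real.cos (ρ*t) * ρ) t := by
      simpa using (hasDerivAt_id t |>.const_mul ρ).sin
    have h2 : HasDerivAt (fun t : ℝ => (1 - t^2) ^ (l+1))
        ((-(2*t)) * (l+1) * (1 - t^2) ^ (l+1-1)) t := by
      have hin : HasDerivAt (fun t : ℝ => 1 - t^2) (-(2*t)) t := by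
        simpa using ((hasDerivAt_pow 2 t).const_sub 1)
      exact hin.rpow_const (Or.inl hb.ne')
    have := h1.mul h2
    refine this.congr_deriv (Eq.symm ?_)
    have : l + 1 - 1 = l := by ring
    rw [this, Real.rpow_add_one hb.ne' l]
    ring
  have hcont : ContinuousOn h (Set.Icc (-1:ℝ) 1) :=
    ((Real.continuous_sin.comp (continuous_const.mul continuous_id)).mul (bw_cont _ hl1)).continuousOn
  have hint : IntervalIntegrable (fun t =>
      ρ * (Real.cos (ρ*t) * (1 - t^2)^(l+1)) - (2*l+2) * (t * Real.sin (ρ*t) * (1 - t^2)^l))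
      volume (-1) 1 :=
    ((intervalIntegrable_cos_bw (by linarith) ρ).const_mul ρ).sub
      ((intervalIntegrable_tsin_bw hl ρ).const_mul (2*l+2))
  have key := intervalIntegral.integral_eq_sub_of_hasDeriv_right_of_le (by norm_num)
    hcont (fun t ht => (hderiv t ht).hasDerivWithinAt) hint
  have hz : h 1 - h (-1) = 0 := by
    simp only [hh]
    norm_num [Real.zero_rpow hl1.ne']
  rw [hz] at key
  rw [intervalIntegral.integral_sub ((intervalIntegrable_cos_bw (by linarith) ρ).const_mul ρ)
    ((intervalIntegrable_tsin_bw hl ρ).const_mul (2*l+2)),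
    intervalIntegral.integral_const_mul, intervalIntegral.integral_const_mul] at key
  rw [bslP, bslQ]
  linarith [key]

lemma PbslR (hl : -1 < l) (ρ : ℝ) : bslP l ρ - bslR l ρ = bslP (l+1) ρ := by
  rw [bslP, bslR, bslP, ← intervalIntegral.integral_sub (intervalIntegrable_cos_bw hl ρ)
    (intervalIntegrable_t2cos_bw hl ρ)]
  apply intervalIntegral.integral_congr
  intro t ht
  rw [Set.uIcc_of_le (by norm_num : (-1:ℝ) ≤ 1)] at ht
  beta_reduce
  rcases eq_or_lt_of_le (by nlinarith [ht.1, ht.2] : (0:ℝ) ≤ 1 - t^2) with h | h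
  · rw [← h, Real.zero_rpow (by linarith : l + 1 ≠ 0)]
    have ht2 : t^2 = 1 := by linarith
    ring_nf
    rw [ht2]
    ring
  · rw [Real.rpow_add_one h.ne' l]
    ring
lemma bslEnergy {u v w : ℝ → ℝ} {c : ℝ} (hc : 0 ≤ c)
    (hu : ∀ t, 1 ≤ t → HasDerivAt u (v t) t)
    (hv : ∀ t, 1 ≤ t → HasDerivAt v (w t) t)
    (hq : ∀ t, 1 ≤ t → |w t + u t| ≤ c / t^2 * |u t|) :
    ∀ t, 1 ≤ t → u t^2 + v t^2 ≤ (u 1^2 + v 1^2) * Real.exp c := by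
  set W : ℝ → ℝ := fun t => (u t^2 + v t^2) * Real.exp (c / t) with hWdef
  have hW : ∀ t, 1 ≤ t → HasDerivAt W
      ((2*u t*v t + 2*v t*w t) * Real.exp (c/t)
        + (u t^2 + v t^2) * (Real.exp (c/t) * (-(c/t^2)))) t := by
    intro t ht
    have ht0 : t ≠ 0 := by linarith
    have hE : HasDerivAt (fun t => u t^2 + v t^2) (2*u t*v t + 2*v t*w t) t := by
      have h1 := ((hu t ht).fun_pow 2)
      have h2 := ((hv t ht).fun_pow 2)
      simpa [mul_comm, mul_assoc, mul_left_comm] using h1.fun_add h2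
    have hexp : HasDerivAt (fun t => Real.exp (c/t)) (Real.exp (c/t) * (-(c/t^2))) t := by
      have h3 : HasDerivAt (fun t : ℝ => c/t) (-(c/t^2)) t := by
        have := (hasDerivAt_inv ht0).const_mul c
        simpa [div_eq_mul_inv, neg_div] using this
      exact h3.exp
    exact hE.mul hexp
  have hmono : AntitoneOn W (Set.Ici 1) := by
    apply antitoneOn_of_deriv_nonpos (convex_Ici 1)
    · exact fun t ht => ((hW t ht).continuousAt).continuousWithinAt
    · intro t ht
      rw [interior_Ici] at ht
      exact ((hW t ht.le).differentiableAt).differentiableWithinAt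
    · intro t ht
      rw [interior_Ici] at ht
      rw [(hW t ht.le).deriv]
      have ht1 : (1:ℝ) ≤ t := ht.le
      have ht2 : (0:ℝ) < t^2 := by positivity
      have hqt := hq t ht1
      have key : 2*u t*v t + 2*v t*w t ≤ (u t^2 + v t^2) * (c/t^2) := by
        have h1 : 2*u t*v t + 2*v t*w t = 2*(v t)*(w t + u t) := by ring
        have h2 : 2*(v t)*(w t + u t) ≤ 2 * |v t| * |w t + u t| := by
          calc 2*(v t)*(w t + u t) ≤ |2*(v t)*(w t + u t)| := le_abs_self _
            _ = 2 * |v t| * |w t + u t| := by rw [abs_mul, abs_mul, abs_two]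
        have h3 : 2 * |v t| * |w t + u t| ≤ 2 * |v t| * (c/t^2*|u t|) := by
          apply mul_le_mul_of_nonneg_left hqt
          positivity
        have h4 : 2 * |v t| * (c/t^2*|u t|) ≤ (u t^2 + v t^2)*(c/t^2) := by
          have h5 : 2 * |v t| * |u t| ≤ u t^2 + v t^2 := by
            nlinarith [sq_nonneg (|u t| - |v t|), sq_abs (u t), sq_abs (v t)]
          have hct : 0 ≤ c/t^2 := by positivity
          nlinarith [mul_le_mul_of_nonneg_right h5 hct]
        linarith
      have hexp_pos : 0 < Real.exp (c/t) := Real.exp_pos _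
      have h6 := mul_le_mul_of_nonneg_right key hexp_pos.le
      nlinarith [h6]
  intro t ht
  have h1 : W t ≤ W 1 := hmono (by norm_num) ht ht
  have h2 : W 1 = (u 1^2 + v 1^2) * Real.exp c := by simp [hWdef]
  have h3 : u t^2 + v t^2 ≤ W t := by
    have hWt : W t = (u t^2 + v t^2) * Real.exp (c/t) := rfl
    have : (1:ℝ) ≤ Real.exp (c/t) := by
      rw [Real.one_le_exp_iff]
      positivity
    nlinarith [sq_nonneg (u t), sq_nonneg (v t)]
  linarith
lemma hasDerivAt_pow_bslP (hl : -1 < l) (a : ℝ) {t : ℝ} (ht : 0 < t) :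
    HasDerivAt (fun s => s^a * bslP l s) (a * t^(a-1) * bslP l t - t^a * bslQ l t) t := by
  have h1 : HasDerivAt (fun s : ℝ => s^a) (a * t^(a-1)) t :=
    Real.hasDerivAt_rpow_const (Or.inl ht.ne')
  have := h1.mul (hasDerivAt_bslP hl t)
  refine this.congr_deriv (Eq.symm ?_)
  ring

lemma hasDerivAt_pow_bslQ (hl : -1 < l) (a : ℝ) {t : ℝ} (ht : 0 < t) :
    HasDerivAt (fun s => s^a * bslQ l s) (a * t^(a-1) * bslQ l t + t^a * bslR l t) t := by
  have h1 : HasDerivAt (fun s : ℝ => s^a) (a * t^(a-1)) t :=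
    Real.hasDerivAt_rpow_const (Or.inl ht.ne')
  exact h1.mul (hasDerivAt_bslQ hl t)

lemma bslDecay (hl : -1 < l) : ∃ C : ℝ, 0 ≤ C ∧ ∀ t, 1 ≤ t → |t^(l+1) * bslP l t| ≤ C := by
  have hc : (0:ℝ) ≤ |l*(l+1)| := abs_nonneg _
  have hu : ∀ t, 1 ≤ t → HasDerivAt (fun s => s^(l+1) * bslP l s)
      ((fun s => (l+1) * s^l * bslP l s - s^(l+1) * bslQ l s) t) t := by
    intro t ht
    have h := hasDerivAt_pow_bslP hl (l+1) (by linarith : (0:ℝ) < t)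
    have he : l + 1 - 1 = l := by ring
    rw [he] at h
    exact h
  have hv : ∀ t, 1 ≤ t → HasDerivAt (fun s => (l+1) * s^l * bslP l s - s^(l+1) * bslQ l s)
      ((fun s => l*(l+1)*s^(l-1)*bslP l s - (2*l+2)*s^l*bslQ l s - s^(l+1)*bslR l s) t) t := by
    intro t ht
    have ht0 : (0:ℝ) < t := by linarith
    have h1 := (hasDerivAt_pow_bslP hl l ht0).const_mul (l+1)
    simp only [← mul_assoc] at h1
    have h2 := hasDerivAt_pow_bslQ hl (l+1) ht0
    have he : l + 1 - 1 = l := by ring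
    rw [he] at h2
    have h3 := h1.sub h2
    refine h3.congr_deriv (Eq.symm ?_)
    beta_reduce
    ring
  have hq : ∀ t, 1 ≤ t →
      |(fun s => l*(l+1)*s^(l-1)*bslP l s - (2*l+2)*s^l*bslQ l s - s^(l+1)*bslR l s) t
        + (fun s => s^(l+1) * bslP l s) t| ≤ |l*(l+1)| / t^2 * |(fun s => s^(l+1) * bslP l s) t| := by
    intro t ht
    have ht0 : (0:ℝ) < t := by linarith
    have ht2 : (0:ℝ) < t^2 := by positivity
    beta_reduce
    have e1 : t^(l+1) = t^(l-1) * t^2 := by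
      rw [← Real.rpow_natCast t 2, ← Real.rpow_add ht0]
      congr 1
      push_cast
      ring
    have e2 : t^l = t^(l-1) * t := by
      have h4 := Real.rpow_add ht0 (l-1) 1
      rw [Real.rpow_one] at h4
      rw [← h4]
      congr 1
      ring
    have hibp := bslIbp hl t
    have hprr := PbslR hl t
    have key : t^2 * ((l*(l+1)*t^(l-1)*bslP l t - (2*l+2)*t^l*bslQ l t - t^(l+1)*bslR l t)
        + t^(l+1) * bslP l t) = (l*(l+1)) * (t^(l+1) * bslP l t) := by
      rw [e1, e2]
      linear_combination (t^4 * t^(l-1)) * hprr + (t^3 * t^(l-1)) * hibp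
    have key2 : (l*(l+1)*t^(l-1)*bslP l t - (2*l+2)*t^l*bslQ l t - t^(l+1)*bslR l t)
        + t^(l+1) * bslP l t = l*(l+1)/t^2 * (t^(l+1) * bslP l t) := by
      field_simp
      linear_combination key
    rw [key2, abs_mul, abs_div, abs_of_pos ht2]
  have hE := bslEnergy hc hu hv hq
  refine ⟨Real.sqrt ((((1:ℝ)^(l+1) * bslP l 1)^2 + ((l+1) * (1:ℝ)^l * bslP l 1 - (1:ℝ)^(l+1) * bslQ l 1)^2)
      * Real.exp (|l*(l+1)|)), Real.sqrt_nonneg _, ?_⟩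
  intro t ht
  have h1 := hE t ht
  have h2 : |t^(l+1) * bslP l t| = Real.sqrt ((t^(l+1) * bslP l t)^2) := (Real.sqrt_sq_eq_abs _).symm
  rw [h2]
  apply Real.sqrt_le_sqrt
  nlinarith [sq_nonneg ((l+1) * t^l * bslP l t - t^(l+1) * bslQ l t)]
lemma besselJ_eq (μ : ℝ) {ρ : ℝ} (hρ : 0 < ρ) :
    besselJ μ ρ = bslK μ * (ρ^μ * bslP (μ - 1/2) ρ) := by
  rw [besselJ, bslK, bslP]
  rw [Real.div_rpow hρ.le (by norm_num : (0:ℝ) ≤ 2)]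
  ring

lemma bslK_rel (ν : ℝ) (hν : 1/2 < ν) : bslK (ν-1) = (2*ν-1) * bslK ν := by
  have hg2 : Real.Gamma (ν + 1/2) = (ν - 1/2) * Real.Gamma (ν - 1 + 1/2) := by
    have h := Real.Gamma_add_one (s := ν - 1/2) (by intro h; linarith : ν - 1/2 ≠ 0)
    calc Real.Gamma (ν + 1/2) = Real.Gamma (ν - 1/2 + 1) := by congr 1; ring
      _ = (ν - 1/2) * Real.Gamma (ν - 1/2) := h
      _ = (ν - 1/2) * Real.Gamma (ν - 1 + 1/2) := by rw [show ν-1/2 = ν-1+1/2 from by ring]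
  have h2 : (2:ℝ)^ν = (2:ℝ)^(ν-1) * 2 := by
    have := Real.rpow_add (by norm_num : (0:ℝ) < 2) (ν-1) 1
    rw [Real.rpow_one] at this
    rw [← this]
    norm_num
  rw [bslK, bslK, hg2, h2]
  have hν2 : (2*ν-1 : ℝ) ≠ 0 := by intro h; linarith
  have key : (2:ℝ)^(ν-1)*2 * (Real.Gamma (1/2) * ((ν-1/2) * Real.Gamma (ν-1+1/2)))
      = (2*ν-1) * ((2:ℝ)^(ν-1) * (Real.Gamma (1/2) * Real.Gamma (ν-1+1/2))) := by ring
  rw [key, mul_inv (2*ν-1) ((2:ℝ)^(ν-1) * (Real.Gamma (1/2) * Real.Gamma (ν-1+1/2))),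
    ← mul_assoc (2*ν-1) (2*ν-1)⁻¹, mul_inv_cancel₀ hν2, one_mul]

lemma besselJ_decay (μ : ℝ) (hμ : -(1/2:ℝ) < μ) :
    ∃ C : ℝ, 0 ≤ C ∧ ∀ t, 1 ≤ t → |besselJ μ t| ≤ C * t^(-(1/2:ℝ)) := by
  have hl : -1 < μ - 1/2 := by linarith
  obtain ⟨C, hC0, hC⟩ := bslDecay hl
  refine ⟨|bslK μ| * C, by positivity, ?_⟩
  intro t ht
  have ht0 : (0:ℝ) < t := by linarith
  rw [besselJ_eq μ ht0]
  have e1 : t^μ = t^(-(1/2:ℝ)) * t^(μ - 1/2 + 1) := by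
    rw [← Real.rpow_add ht0]
    congr 1
    ring
  rw [e1, abs_mul, abs_mul, abs_mul]
  have h3 : |t^(-(1/2:ℝ))| = t^(-(1/2:ℝ)) := abs_of_pos (Real.rpow_pos_of_pos ht0 _)
  rw [h3]
  have h4 := hC t ht
  rw [abs_mul] at h4
  have h6 := mul_le_mul_of_nonneg_left h4
    (mul_nonneg (abs_nonneg (bslK μ)) (Real.rpow_pos_of_pos ht0 (-(1/2:ℝ))).le)
  nlinarith [h6]

lemma continuousAt_besselJ_div (μ γ : ℝ) (hμ : -1 < μ - 1/2) {t : ℝ} (ht : 0 < t) :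
    ContinuousAt (fun s => besselJ μ s / s^γ) t := by
  have heq : (fun s => besselJ μ s / s^γ) =ᶠ[nhds t]
      (fun s => bslK μ * (s^(μ - γ) * bslP (μ - 1/2) s)) := by
    filter_upwards [IsOpen.mem_nhds isOpen_Ioi ht] with s hs
    rw [besselJ_eq μ hs, Real.rpow_sub hs μ γ]
    ring
  rw [continuousAt_congr heq]
  have h1 : ContinuousAt (fun s : ℝ => s^(μ-γ)) t :=
    Real.continuousAt_rpow_const _ _ (Or.inl ht.ne')
  exact ((h1.mul (hasDerivAt_bslP hμ t).continuousAt)).const_mul (bslK μ)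

lemma hasDerivAt_psi (ν β : ℝ) (hν : 1/2 < ν) {t : ℝ} (ht : 0 < t) :
    HasDerivAt (fun s => besselJ (ν-1) s / s^β)
      ((ν-1-β) * (besselJ (ν-1) t / t^(β+1)) - besselJ ν t / t^β) t := by
  have hl : -1 < ν - 1 - 1/2 := by linarith
  have hg : HasDerivAt (fun s => bslK (ν-1) * (s^(ν-1-β) * bslP (ν-1-1/2) s))
      (bslK (ν-1) * ((ν-1-β) * t^(ν-1-β-1) * bslP (ν-1-1/2) t - t^(ν-1-β) * bslQ (ν-1-1/2) t)) t :=
    (hasDerivAt_pow_bslP hl (ν-1-β) ht).const_mul _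
  have heq : (fun s => besselJ (ν-1) s / s^β) =ᶠ[nhds t]
      (fun s => bslK (ν-1) * (s^(ν-1-β) * bslP (ν-1-1/2) s)) := by
    filter_upwards [IsOpen.mem_nhds isOpen_Ioi ht] with s hs
    rw [besselJ_eq (ν-1) hs, Real.rpow_sub hs (ν-1) β]
    ring
  refine HasDerivAt.congr_of_eventuallyEq ?_ heq
  refine hg.congr_deriv (Eq.symm ?_)
  have e3 : besselJ (ν-1) t / t^(β+1) = bslK (ν-1) * (t^(ν-1-β-1) * bslP (ν-1-1/2) t) := by
    rw [besselJ_eq (ν-1) ht, show ν-1-β-1 = (ν-1)-(β+1) by ring, Real.rpow_sub ht (ν-1) (β+1)]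
    ring
  have e4 : besselJ ν t / t^β = bslK ν * (t^(ν-β) * bslP (ν-1-1/2+1) t) := by
    rw [besselJ_eq ν ht, Real.rpow_sub ht ν β, show ν-1-1/2+1 = ν-1/2 by ring]
    ring
  have e5 : (2*ν-1) * (t^(ν-1-β) * bslQ (ν-1-1/2) t) = t^(ν-β) * bslP (ν-1-1/2+1) t := by
    have h5 := bslIbp hl t
    have e6 : t^(ν-β) = t^(ν-1-β) * t := by
      have h6 := Real.rpow_add ht (ν-1-β) 1
      rw [Real.rpow_one] at h6
      rw [← h6]
      congr 1
      ring
    rw [e6]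
    rw [show 2*(ν-1-1/2)+2 = 2*ν-1 by ring] at h5
    linear_combination t^(ν-1-β) * h5.symm
  rw [e3, e4, bslK_rel ν hν]
  linear_combination (bslK ν) * e5

end bslAux

/-- For `ν > 1/2`, `β > −1/2` and `r > 0`, the improper integrals
`∫_r^∞ J_ν(t)/t^β dt` and `∫_r^∞ J_{ν−1}(t)/t^{β+1} dt` (limits of `∫_r^R` as `R → ∞`)
converge, and
`∫_r^∞ J_ν(t)/t^β dt = J_{ν−1}(r)/r^β + (ν − β − 1) ∫_r^∞ J_{ν−1}(t)/t^{β+1} dt`. -/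
theorem stmt_6 (ν β : ℝ) (hν : (1 / 2 : ℝ) < ν) (hβ : -(1 / 2 : ℝ) < β)
    (r : ℝ) (hr : 0 < r) :
    ∃ I₁ I₂ : ℝ,
      Filter.Tendsto (fun R : ℝ => ∫ t in r..R, besselJ ν t / t ^ β)
        Filter.atTop (nhds I₁) ∧
      Filter.Tendsto (fun R : ℝ => ∫ t in r..R, besselJ (ν - 1) t / t ^ (β + 1))
        Filter.atTop (nhds I₂) ∧
      I₁ = besselJ (ν - 1) r / r ^ β + (ν - β - 1) * I₂ := by
  have hc1 : ∀ t : ℝ, 0 < t → ContinuousAt (fun s => besselJ ν s / s^β) t :=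
    fun t ht => continuousAt_besselJ_div ν β (by linarith) ht
  have hc2 : ∀ t : ℝ, 0 < t → ContinuousAt (fun s => besselJ (ν-1) s / s^(β+1)) t :=
    fun t ht => continuousAt_besselJ_div (ν-1) (β+1) (by linarith) ht
  obtain ⟨C, hC0, hC⟩ := besselJ_decay (ν-1) (by linarith)
  set m : ℝ := max r 1 with hm
  have hrm : r ≤ m := le_max_left _ _
  have hm1 : (1:ℝ) ≤ m := le_max_right _ _
  have hm0 : (0:ℝ) < m := lt_of_lt_of_le hr hrm
  have hint : IntegrableOn (fun t => besselJ (ν-1) t / t^(β+1)) (Set.Ioi r) := by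
    have hIoc : IntegrableOn (fun t => besselJ (ν-1) t / t^(β+1)) (Set.Ioc r m) := by
      have hco : ContinuousOn (fun s => besselJ (ν-1) s / s^(β+1)) (Set.Icc r m) :=
        fun t ht => (hc2 t (lt_of_lt_of_le hr ht.1)).continuousWithinAt
      exact hco.integrableOn_Icc.mono_set Set.Ioc_subset_Icc_self
    have hIoi : IntegrableOn (fun t => besselJ (ν-1) t / t^(β+1)) (Set.Ioi m) := by
      have hq : (-(1/2:ℝ) - (β+1)) < -1 := by linarith
      have hco2 : ContinuousOn (fun s => besselJ (ν-1) s / s^(β+1)) (Set.Ioi m) :=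
        fun t ht => (hc2 t (lt_of_le_of_lt hm0.le ht)).continuousWithinAt
      refine ((integrableOn_Ioi_rpow_of_lt hq hm0).const_mul C).mono' ?_ ?_
      · exact hco2.aestronglyMeasurable measurableSet_Ioi
      · filter_upwards [ae_restrict_mem measurableSet_Ioi] with t ht
        have ht1 : (1:ℝ) ≤ t := le_trans hm1 (le_of_lt ht)
        have ht0 : (0:ℝ) < t := by linarith
        have hpow : (0:ℝ) < t^(β+1) := Real.rpow_pos_of_pos ht0 _
        rw [Real.norm_eq_abs, abs_div, abs_of_pos hpow]
        calc |besselJ (ν-1) t| / t^(β+1) ≤ (C * t^(-(1/2:ℝ))) / t^(β+1) := by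
              gcongr
              exact hC t ht1
          _ = C * t^(-(1/2:ℝ) - (β+1)) := by
              rw [mul_div_assoc, ← Real.rpow_sub ht0]
    rw [← Set.Ioc_union_Ioi_eq_Ioi hrm]
    exact hIoc.union hIoi
  set I₂ : ℝ := ∫ t in Set.Ioi r, besselJ (ν-1) t / t^(β+1) with hI₂
  have tendsto₂ : Tendsto (fun R : ℝ => ∫ t in r..R, besselJ (ν-1) t / t^(β+1)) atTop (nhds I₂) :=
    intervalIntegral_tendsto_integral_Ioi r hint tendsto_id
  have key : ∀ R, r ≤ R → (∫ t in r..R, besselJ ν t / t^β)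
      = besselJ (ν-1) r / r^β - besselJ (ν-1) R / R^β
        + (ν-1-β) * ∫ t in r..R, besselJ (ν-1) t / t^(β+1) := by
    intro R hR
    have hpos : ∀ t ∈ Set.uIcc r R, 0 < t := by
      intro t ht
      rw [Set.uIcc_of_le hR] at ht
      exact lt_of_lt_of_le hr ht.1
    have hd : ∀ t ∈ Set.uIcc r R, HasDerivAt (fun s => besselJ (ν-1) s / s^β)
        ((fun t => (ν-1-β) * (besselJ (ν-1) t / t^(β+1)) - besselJ ν t / t^β) t) t :=
      fun t ht => hasDerivAt_psi ν β hν (hpos t ht)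
    have hco2 : ContinuousOn (fun s => besselJ (ν-1) s / s^(β+1)) (Set.uIcc r R) :=
      fun t ht => (hc2 t (hpos t ht)).continuousWithinAt
    have hco1 : ContinuousOn (fun s => besselJ ν s / s^β) (Set.uIcc r R) :=
      fun t ht => (hc1 t (hpos t ht)).continuousWithinAt
    have hi2 : IntervalIntegrable (fun s => besselJ (ν-1) s / s^(β+1)) volume r R :=
      hco2.intervalIntegrable
    have hi1 : IntervalIntegrable (fun s => besselJ ν s / s^β) volume r R :=
      hco1.intervalIntegrable
    have hFTC := intervalIntegral.integral_eq_sub_of_hasDerivAt hd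
      ((hi2.const_mul (ν-1-β)).sub hi1)
    rw [intervalIntegral.integral_sub (hi2.const_mul _) hi1,
      intervalIntegral.integral_const_mul] at hFTC
    linarith [hFTC]
  have hψ0 : Tendsto (fun R : ℝ => besselJ (ν-1) R / R^β) atTop (nhds 0) := by
    apply squeeze_zero_norm' (a := fun R : ℝ => C * R^(-(1/2 + β)))
    · filter_upwards [eventually_ge_atTop (1:ℝ)] with R hR
      have hR0 : (0:ℝ) < R := by linarith
      rw [Real.norm_eq_abs, abs_div, abs_of_pos (Real.rpow_pos_of_pos hR0 β)]
      calc |besselJ (ν-1) R| / R^β ≤ (C * R^(-(1/2:ℝ))) / R^β := by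
            gcongr
            exact hC R hR
        _ = C * R^(-(1/2 + β)) := by
            rw [mul_div_assoc, ← Real.rpow_sub hR0]
            congr 1
            ring
    · have h := (tendsto_rpow_neg_atTop (by linarith : (0:ℝ) < 1/2 + β)).const_mul C
      simpa using h
  refine ⟨besselJ (ν-1) r / r^β + (ν-β-1) * I₂, I₂, ?_, tendsto₂, rfl⟩
  have hlim : Tendsto (fun R : ℝ => besselJ (ν-1) r / r^β - besselJ (ν-1) R / R^β
      + (ν-1-β) * ∫ t in r..R, besselJ (ν-1) t / t^(β+1)) atTop
      (nhds (besselJ (ν-1) r / r^β - 0 + (ν-1-β) * I₂)) :=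
    (tendsto_const_nhds.sub hψ0).add (tendsto₂.const_mul _)
  rw [sub_zero, show ν-1-β = ν-β-1 from by ring] at hlim
  apply hlim.congr'
  filter_upwards [eventually_ge_atTop r] with R hR
  rw [key R hR, show ν-1-β = ν-β-1 from by ring]
end

section
/- Let n ≥ 1 be an integer and let 𝓜 : (0, ∞) → ℂ be n-times differentiable with inf_{r > 0} |𝓜(r)| > 0 and such that there exists C < ∞ with |r^k 𝓜^{(k)}(r)| ≤ C for all r > 0 and all k = 0, 1, …, n. Then the function 1/𝓜 is n-times differentiable on (0, ∞) and there exists C′ < ∞ such that |r^k (1/𝓜)^{(k)}(r)| ≤ C′ for all r > 0 and all k = 0, 1, …, n. -/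
open Set Filter Finset Topology

private lemma iteratedDeriv_zero_fun (k : ℕ) (x : ℝ) :
    iteratedDeriv k (fun _ : ℝ => (0 : ℂ)) x = 0 := by
  induction k generalizing x with
  | zero => simp
  | succ m ih =>
    rw [iteratedDeriv_succ']
    simp only [deriv_const']
    exact ih x

private lemma iteratedDeriv_const_one_succ (k : ℕ) (x : ℝ) :
    iteratedDeriv (k + 1) (fun _ : ℝ => (1 : ℂ)) x = 0 := by
  rw [iteratedDeriv_succ']
  simp only [deriv_const']
  exact iteratedDeriv_zero_fun k x

private lemma leibniz_aux (f g : ℝ → ℂ) (k : ℕ)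
    (hf : ∀ j < k, ∀ x ∈ Set.Ioi (0:ℝ), DifferentiableAt ℝ (iteratedDeriv j f) x)
    (hg : ∀ j < k, ∀ x ∈ Set.Ioi (0:ℝ), DifferentiableAt ℝ (iteratedDeriv j g) x)
    {x : ℝ} (hx : x ∈ Set.Ioi (0:ℝ)) :
    iteratedDeriv k (fun y => f y * g y) x =
      ∑ i ∈ Finset.range (k+1),
        (k.choose i : ℂ) * (iteratedDeriv i f x * iteratedDeriv (k-i) g x) := by
  induction k generalizing x with
  | zero => simp
  | succ m ih =>
    have hmem : Set.Ioi (0:ℝ) ∈ 𝓝 x := isOpen_Ioi.mem_nhds hx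
    have heq : iteratedDeriv m (fun y => f y * g y) =ᶠ[𝓝 x]
        fun y => ∑ i ∈ Finset.range (m+1),
          (m.choose i : ℂ) * (iteratedDeriv i f y * iteratedDeriv (m-i) g y) :=
      eventually_of_mem hmem fun y hy =>
        ih (fun j hj => hf j (hj.trans (Nat.lt_succ_self m)))
           (fun j hj => hg j (hj.trans (Nat.lt_succ_self m))) hy
    rw [iteratedDeriv_succ, heq.deriv_eq]
    have hderw : deriv (fun y => ∑ i ∈ Finset.range (m+1),
        (m.choose i : ℂ) * (iteratedDeriv i f y * iteratedDeriv (m-i) g y)) x =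
        ∑ i ∈ Finset.range (m+1), (m.choose i : ℂ) *
          (iteratedDeriv (i+1) f x * iteratedDeriv (m-i) g x
            + iteratedDeriv i f x * iteratedDeriv (m-i+1) g x) := by
      rw [deriv_fun_sum]
      · refine Finset.sum_congr rfl fun i hi => ?_
        have hi' : i < m + 1 := Finset.mem_range.mp hi
        have hfi : DifferentiableAt ℝ (iteratedDeriv i f) x := hf i hi' x hx
        have hgi : DifferentiableAt ℝ (iteratedDeriv (m-i) g) x :=
          hg (m-i) (Nat.lt_succ_of_le (Nat.sub_le m i)) x hx
        rw [deriv_const_mul (d := fun y => iteratedDeriv i f y * iteratedDeriv (m-i) g y) _ (hfi.mul hgi), deriv_fun_mul hfi hgi,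
          ← iteratedDeriv_succ, ← iteratedDeriv_succ]
      · intro i hi
        have hi' : i < m + 1 := Finset.mem_range.mp hi
        exact ((hf i hi' x hx).mul
          (hg (m-i) (Nat.lt_succ_of_le (Nat.sub_le m i)) x hx)).const_mul _
    rw [hderw]
    have key := Finset.sum_choose_succ_mul
      (fun i j => iteratedDeriv i f x * iteratedDeriv j g x) m
    rw [key]
    rw [← Finset.sum_add_distrib]
    refine Finset.sum_congr rfl fun i hi => ?_
    have hi' : i ≤ m := Nat.lt_succ_iff.mp (Finset.mem_range.mp hi)
    have hms : m + 1 - i = m - i + 1 := by omega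
    rw [hms]
    ring

/-- Let `𝓜 : (0,∞) → ℂ` be `n`-times differentiable (`n ≥ 1`) with
`inf_{r>0} |𝓜(r)| > 0` and `|r^k 𝓜^{(k)}(r)| ≤ C` for all `r > 0`, `k = 0,…,n`.
Then `1/𝓜` is `n`-times differentiable on `(0,∞)` and satisfies
`|r^k (1/𝓜)^{(k)}(r)| ≤ C′` for all `r > 0`, `k = 0,…,n`. -/
theorem stmt_11 (n : ℕ) (hn : 1 ≤ n) (M : ℝ → ℂ)
    (hdiff : ∀ k < n, DifferentiableOn ℝ (iteratedDeriv k M) (Set.Ioi 0))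
    (hinf : ∃ ε > 0, ∀ r : ℝ, 0 < r → ε ≤ ‖M r‖)
    (C : ℝ) (hC : ∀ r : ℝ, 0 < r → ∀ k ≤ n, r ^ k * ‖iteratedDeriv k M r‖ ≤ C) :
    (∀ k < n, DifferentiableOn ℝ (iteratedDeriv k (fun s => (M s)⁻¹)) (Set.Ioi 0)) ∧
    ∃ C' : ℝ, ∀ r : ℝ, 0 < r → ∀ k ≤ n,
      r ^ k * ‖iteratedDeriv k (fun s => (M s)⁻¹) r‖ ≤ C' := by
  obtain ⟨ε, hε, hεM⟩ := hinf
  set g : ℝ → ℂ := fun s => (M s)⁻¹ with hgdef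
  have hMd : ∀ j < n, ∀ x ∈ Set.Ioi (0:ℝ), DifferentiableAt ℝ (iteratedDeriv j M) x :=
    fun j hj x hx => (hdiff j hj).differentiableAt (isOpen_Ioi.mem_nhds hx)
  have hMne : ∀ x ∈ Set.Ioi (0:ℝ), M x ≠ 0 := by
    intro x hx h
    have := hεM x hx
    rw [h] at this
    simp at this
    linarith
  have hCnn : 0 ≤ C := by
    have h := hC 1 one_pos 0 (Nat.zero_le n)
    simp only [pow_zero, one_mul, iteratedDeriv_zero] at h
    exact le_trans (norm_nonneg _) h
  -- Key combined induction : differentiability and recursion formula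
  have key : ∀ k, k ≤ n →
      ((k < n → ∀ x ∈ Set.Ioi (0:ℝ), DifferentiableAt ℝ (iteratedDeriv k g) x) ∧
       (1 ≤ k → ∀ x ∈ Set.Ioi (0:ℝ), iteratedDeriv k g x
          = -(M x)⁻¹ * ∑ i ∈ Finset.range k, (k.choose i : ℂ) *
              (iteratedDeriv i g x * iteratedDeriv (k-i) M x))) := by
    intro k
    induction k using Nat.strong_induction_on with
    | _ k IH =>
      intro hk
      have hdg : ∀ j < k, ∀ x ∈ Set.Ioi (0:ℝ), DifferentiableAt ℝ (iteratedDeriv j g) x :=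
        fun j hj x hx =>
          (IH j hj (le_of_lt (lt_of_lt_of_le hj hk))).1 (lt_of_lt_of_le hj hk) x hx
      have hform : 1 ≤ k → ∀ x ∈ Set.Ioi (0:ℝ), iteratedDeriv k g x
          = -(M x)⁻¹ * ∑ i ∈ Finset.range k, (k.choose i : ℂ) *
              (iteratedDeriv i g x * iteratedDeriv (k-i) M x) := by
        intro hk1 x hx
        have hL := leibniz_aux g M k hdg (fun j hj => hMd j (lt_of_lt_of_le hj hk)) hx
        have hone : (fun y => g y * M y) =ᶠ[𝓝 x] fun _ => (1:ℂ) :=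
          eventually_of_mem (isOpen_Ioi.mem_nhds hx) fun y hy => inv_mul_cancel₀ (hMne y hy)
        have h0 : iteratedDeriv k (fun y => g y * M y) x = 0 := by
          obtain ⟨m, rfl⟩ := Nat.exists_eq_add_of_le hk1
          rw [hone.iteratedDeriv_eq, Nat.add_comm, iteratedDeriv_const_one_succ]
        rw [h0, Finset.sum_range_succ] at hL
        simp only [Nat.choose_self, Nat.cast_one, one_mul, Nat.sub_self,
          iteratedDeriv_zero] at hL
        have hMx := hMne x hx
        have h2 : iteratedDeriv k g x * M x
            = -∑ i ∈ Finset.range k, (k.choose i : ℂ) *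
                (iteratedDeriv i g x * iteratedDeriv (k-i) M x) := by
          linear_combination -hL
        rw [neg_mul, ← mul_neg, ← h2, mul_comm (iteratedDeriv k g x) (M x), ← mul_assoc,
          inv_mul_cancel₀ hMx, one_mul]
      refine ⟨?_, hform⟩
      intro hkn x hx
      rcases Nat.eq_zero_or_pos k with rfl | hk1
      · have hM0 : DifferentiableAt ℝ M x := by
          have := hMd 0 hn x hx
          rwa [iteratedDeriv_zero] at this
        rw [iteratedDeriv_zero]; exact hM0.inv (hMne x hx)
      · have heq : iteratedDeriv k g =ᶠ[𝓝 x]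
            fun y => -(M y)⁻¹ * ∑ i ∈ Finset.range k, (k.choose i : ℂ) *
              (iteratedDeriv i g y * iteratedDeriv (k-i) M y) :=
          eventually_of_mem (isOpen_Ioi.mem_nhds hx) fun y hy => hform hk1 y hy
        rw [heq.differentiableAt_iff]
        have hM0 : DifferentiableAt ℝ M x := by
          have := hMd 0 hn x hx
          rwa [iteratedDeriv_zero] at this
        refine ((hM0.inv (hMne x hx)).neg).mul ?_
        refine DifferentiableAt.fun_sum fun i hi => ?_
        have hi' : i < k := Finset.mem_range.mp hi
        refine ((hdg i hi' x hx).mul (hMd (k-i) ?_ x hx)).const_mul _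
        omega
      done
  -- Bounds
  have bound : ∀ k, k ≤ n → ∃ D : ℝ, 0 ≤ D ∧
      ∀ r : ℝ, 0 < r → r ^ k * ‖iteratedDeriv k g r‖ ≤ D := by
    intro k
    induction k using Nat.strong_induction_on with
    | _ k IH =>
      intro hk
      rcases Nat.eq_zero_or_pos k with rfl | hk1
      · refine ⟨ε⁻¹, inv_nonneg.mpr hε.le, fun r hr => ?_⟩
        have h1 : ‖g r‖ = ‖M r‖⁻¹ := by simp [hgdef]
        have h2 : ‖M r‖⁻¹ ≤ ε⁻¹ := by
          apply inv_anti₀ hε (hεM r hr)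
        simpa [h1] using h2
      · have hD : ∀ i : ℕ, ∃ D : ℝ, 0 ≤ D ∧
            (i < k → ∀ r, 0 < r → r ^ i * ‖iteratedDeriv i g r‖ ≤ D) := by
          intro i
          by_cases hi : i < k
          · obtain ⟨D, h0, hb⟩ := IH i hi (hi.le.trans hk)
            exact ⟨D, h0, fun _ => hb⟩
          · exact ⟨0, le_refl _, fun h => absurd h hi⟩
        choose D hD0 hDb using hD
        refine ⟨ε⁻¹ * ∑ i ∈ Finset.range k, (k.choose i : ℝ) * (D i * C), ?_, ?_⟩
        · have : 0 ≤ ∑ i ∈ Finset.range k, (k.choose i : ℝ) * (D i * C) :=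
            Finset.sum_nonneg fun i _ =>
              mul_nonneg (Nat.cast_nonneg _) (mul_nonneg (hD0 i) hCnn)
          exact mul_nonneg (inv_nonneg.mpr hε.le) this
        intro r hr
        have hform := (key k hk).2 hk1 r hr
        rw [hform]
        have hnormform : ‖-(M r)⁻¹ * ∑ i ∈ Finset.range k, (k.choose i : ℂ) *
            (iteratedDeriv i g r * iteratedDeriv (k-i) M r)‖
            = ‖M r‖⁻¹ * ‖∑ i ∈ Finset.range k, (k.choose i : ℂ) *
            (iteratedDeriv i g r * iteratedDeriv (k-i) M r)‖ := by
          rw [norm_mul, norm_neg, norm_inv]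
        rw [hnormform]
        have hSB : r ^ k * ‖∑ i ∈ Finset.range k, (k.choose i : ℂ) *
            (iteratedDeriv i g r * iteratedDeriv (k-i) M r)‖
            ≤ ∑ i ∈ Finset.range k, (k.choose i : ℝ) * (D i * C) := by
          calc r ^ k * ‖∑ i ∈ Finset.range k, (k.choose i : ℂ) *
              (iteratedDeriv i g r * iteratedDeriv (k-i) M r)‖
              ≤ r ^ k * ∑ i ∈ Finset.range k, ‖(k.choose i : ℂ) *
                (iteratedDeriv i g r * iteratedDeriv (k-i) M r)‖ := by
                apply mul_le_mul_of_nonneg_left (norm_sum_le _ _) (pow_nonneg hr.le k)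
            _ = ∑ i ∈ Finset.range k, r ^ k * ‖(k.choose i : ℂ) *
                (iteratedDeriv i g r * iteratedDeriv (k-i) M r)‖ := Finset.mul_sum _ _ _
            _ ≤ ∑ i ∈ Finset.range k, (k.choose i : ℝ) * (D i * C) := by
                refine Finset.sum_le_sum fun i hi => ?_
                have hi' : i < k := Finset.mem_range.mp hi
                have hnorm : ‖(k.choose i : ℂ) *
                    (iteratedDeriv i g r * iteratedDeriv (k-i) M r)‖
                    = (k.choose i : ℝ) * (‖iteratedDeriv i g r‖ *
                      ‖iteratedDeriv (k-i) M r‖) := by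
                  rw [norm_mul, norm_mul]
                  norm_num
                rw [hnorm]
                have hpow : r ^ k = r ^ i * r ^ (k - i) := by
                  rw [← pow_add]
                  congr 1
                  omega
                have hgoal : r ^ k * ((k.choose i : ℝ) * (‖iteratedDeriv i g r‖ *
                    ‖iteratedDeriv (k-i) M r‖))
                    = (k.choose i : ℝ) * ((r ^ i * ‖iteratedDeriv i g r‖) *
                      (r ^ (k-i) * ‖iteratedDeriv (k-i) M r‖)) := by
                  rw [hpow]; ring
                rw [hgoal]
                apply mul_le_mul_of_nonneg_left _ (by positivity)
                apply mul_le_mul (hDb i hi' r hr) (hC r hr (k-i) (by omega))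
                  (mul_nonneg (pow_nonneg hr.le _) (norm_nonneg _)) (hD0 i)
        have hMinv : ‖M r‖⁻¹ ≤ ε⁻¹ := inv_anti₀ hε (hεM r hr)
        calc r ^ k * (‖M r‖⁻¹ * ‖∑ i ∈ Finset.range k, (k.choose i : ℂ) *
            (iteratedDeriv i g r * iteratedDeriv (k-i) M r)‖)
            = ‖M r‖⁻¹ * (r ^ k * ‖∑ i ∈ Finset.range k, (k.choose i : ℂ) *
              (iteratedDeriv i g r * iteratedDeriv (k-i) M r)‖) := by ring
          _ ≤ ε⁻¹ * (∑ i ∈ Finset.range k, (k.choose i : ℝ) * (D i * C)) := by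
              apply mul_le_mul hMinv hSB
                (mul_nonneg (pow_nonneg hr.le _) (norm_nonneg _)) (inv_nonneg.mpr hε.le)
  constructor
  · intro k hkn x hx
    exact ((key k hkn.le).1 hkn x hx).differentiableWithinAt
  · have hB : ∀ k : ℕ, ∃ D : ℝ, 0 ≤ D ∧
        (k ≤ n → ∀ r : ℝ, 0 < r → r ^ k * ‖iteratedDeriv k g r‖ ≤ D) := by
      intro k
      by_cases hk : k ≤ n
      · obtain ⟨D, h0, hb⟩ := bound k hk
        exact ⟨D, h0, fun _ => hb⟩
      · exact ⟨0, le_refl _, fun h => absurd h hk⟩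
    choose D hD0 hDb using hB
    refine ⟨∑ k ∈ Finset.range (n+1), D k, fun r hr k hkn => ?_⟩
    exact le_trans (hDb k hkn r hr)
      (Finset.single_le_sum (fun i _ => hD0 i) (Finset.mem_range.mpr (Nat.lt_succ_of_le hkn)))
end

section
/- Let n ≥ 1 be an integer, ℓ a positive even integer, and 0 < α < ℓ. Then there exists a constant C such that |r^k (d/dr)^k (r^α W(r))| ≤ C for all 0 < r ≤ 1 and all k = 0, 1, …, n. -/
open MeasureTheory

/-- `W(r) = ∫_{|y| > r} sin^ℓ(y₁)/|y|^{n+α} dy` on `ℝⁿ`. -/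
noncomputable def W (n : ℕ) (hn : 0 < n) (ℓ : ℕ) (α : ℝ) (r : ℝ) : ℝ :=
  ∫ y in {y : EuclideanSpace ℝ (Fin n) | r < ‖y‖},
    Real.sin (y ⟨0, hn⟩) ^ ℓ / ‖y‖ ^ ((n : ℝ) + α)

open MeasureTheory Set Real Metric
open scoped ENNReal NNReal
noncomputable def gg (ℓ k : ℕ) : ℝ → ℝ := iteratedDeriv k (fun t => Real.sin t ^ ℓ)


lemma gg_contDiff (ℓ : ℕ) : ContDiff ℝ ⊤ (fun t => Real.sin t ^ ℓ) :=
  Real.contDiff_sin.pow ℓ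

lemma gg_hasDerivAt (ℓ k : ℕ) (s : ℝ) : HasDerivAt (gg ℓ k) (gg ℓ (k+1) s) s := by
  have h1 : DifferentiableAt ℝ (gg ℓ k) s :=
    ((gg_contDiff ℓ).differentiable_iteratedDeriv k (by simp)).differentiableAt
  have := h1.hasDerivAt
  rwa [show deriv (gg ℓ k) s = gg ℓ (k+1) s from by rw [gg, gg, iteratedDeriv_succ]] at this

lemma gg_cont (ℓ k : ℕ) : Continuous (gg ℓ k) :=
  continuous_iff_continuousAt.2 fun s => (gg_hasDerivAt ℓ k s).continuousAt

lemma periodic_deriv' (f : ℝ → ℝ) (c : ℝ) (h : Function.Periodic f c) :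
    Function.Periodic (deriv f) c := by
  intro x
  have h2 : (fun y => f (y + c)) = f := funext h
  calc deriv f (x + c) = deriv (fun y => f (y + c)) x := (deriv_comp_add_const f c x).symm
  _ = deriv f x := by rw [h2]

lemma gg_periodic (ℓ k : ℕ) : Function.Periodic (gg ℓ k) (2 * π) := by
  induction k with
  | zero => exact fun x => by simp [gg, Real.sin_periodic x]
  | succ k ih => rw [gg, iteratedDeriv_succ]; exact periodic_deriv' _ _ ih

lemma gg_bound (ℓ k : ℕ) : ∃ M : ℝ, 0 ≤ M ∧ ∀ s, |gg ℓ k s| ≤ M := by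
  have hb := (gg_periodic ℓ k).isBounded_of_continuous Real.two_pi_pos.ne' (gg_cont ℓ k)
  obtain ⟨M, hM⟩ := hb.exists_norm_le
  exact ⟨|M|, abs_nonneg _, fun s => by
    simpa [Real.norm_eq_abs] using ((hM _ (mem_range_self s)).trans (le_abs_self M))⟩


-- coordinate bound
lemma coord_le_norm {n : ℕ} (x : EuclideanSpace ℝ (Fin n)) (i : Fin n) : |x i| ≤ ‖x‖ := by
  rw [EuclideanSpace.norm_eq]
  rw [← Real.sqrt_sq_eq_abs]
  apply Real.sqrt_le_sqrt
  calc x i ^ 2 ≤ ∑ j : Fin n, ‖x j‖ ^ 2 := by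
        simpa [Real.norm_eq_abs, sq_abs] using
          Finset.single_le_sum (f := fun j => x j ^ 2) (fun j _ => sq_nonneg _) (Finset.mem_univ i)

noncomputable def σm (n : ℕ) : Measure (Metric.sphere (0 : EuclideanSpace ℝ (Fin n)) 1) :=
  (volume : Measure (EuclideanSpace ℝ (Fin n))).toSphere

instance (n : ℕ) : IsFiniteMeasure (σm n) := by
  unfold σm; infer_instance

noncomputable def Tk (n : ℕ) (hn : 0 < n) (ℓ k : ℕ) (ρ : ℝ) : ℝ :=
  ∫ ω : Metric.sphere (0 : EuclideanSpace ℝ (Fin n)) 1,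
    ((ω : EuclideanSpace ℝ (Fin n)) ⟨0, hn⟩) ^ k *
      gg ℓ k (ρ * (ω : EuclideanSpace ℝ (Fin n)) ⟨0, hn⟩) ∂(σm n)

lemma coord_cont (n : ℕ) (hn : 0 < n) :
    Continuous fun ω : Metric.sphere (0 : EuclideanSpace ℝ (Fin n)) 1 =>
      (ω : EuclideanSpace ℝ (Fin n)) ⟨0, hn⟩ :=
  (EuclideanSpace.proj (⟨0, hn⟩ : Fin n)).continuous.comp continuous_subtype_val

lemma sphere_coord_le (n : ℕ) (hn : 0 < n) (ω : Metric.sphere (0 : EuclideanSpace ℝ (Fin n)) 1) :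
    |(ω : EuclideanSpace ℝ (Fin n)) ⟨0, hn⟩| ≤ 1 := by
  have := coord_le_norm (ω : EuclideanSpace ℝ (Fin n)) ⟨0, hn⟩
  rwa [mem_sphere_zero_iff_norm.1 ω.2] at this

lemma Tk_hasDerivAt (n : ℕ) (hn : 0 < n) (ℓ k : ℕ) (r : ℝ) :
    HasDerivAt (Tk n hn ℓ k) (Tk n hn ℓ (k+1) r) r := by
  obtain ⟨M, hM0, hM⟩ := gg_bound ℓ (k+1)
  set c : Metric.sphere (0 : EuclideanSpace ℝ (Fin n)) 1 → ℝ :=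
    fun ω => (ω : EuclideanSpace ℝ (Fin n)) ⟨0, hn⟩ with hc
  have ccont : Continuous c := coord_cont n hn
  have Fcont : ∀ x : ℝ, Continuous fun ω => c ω ^ k * gg ℓ k (x * c ω) := fun x =>
    (ccont.pow k).mul ((gg_cont ℓ k).comp (continuous_const.mul ccont))
  have F'cont : ∀ x : ℝ, Continuous fun ω => c ω ^ (k+1) * gg ℓ (k+1) (x * c ω) := fun x =>
    (ccont.pow (k+1)).mul ((gg_cont ℓ (k+1)).comp (continuous_const.mul ccont))
  have key := hasDerivAt_integral_of_dominated_loc_of_deriv_le (μ := σm n)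
    (F := fun x ω => c ω ^ k * gg ℓ k (x * c ω))
    (F' := fun x ω => c ω ^ (k+1) * gg ℓ (k+1) (x * c ω))
    (bound := fun _ => M) (x₀ := r) (Metric.ball_mem_nhds r one_pos)
    (Filter.Eventually.of_forall fun x => (Fcont x).aestronglyMeasurable)
    ?_ ((F'cont r).aestronglyMeasurable) ?_ (integrable_const M) ?_
  · exact key.2
  · -- integrability of F r
    obtain ⟨Mk, hMk0, hMk⟩ := gg_bound ℓ k
    refine (integrable_const Mk).mono' (Fcont r).aestronglyMeasurable ?_
    refine Filter.Eventually.of_forall fun ω => ?_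
    rw [Real.norm_eq_abs, abs_mul, abs_pow]
    calc |c ω| ^ k * |gg ℓ k (r * c ω)| ≤ 1 ^ k * Mk := by
          apply mul_le_mul (pow_le_pow_left₀ (abs_nonneg _) (sphere_coord_le n hn ω) k)
            (hMk _) (abs_nonneg _) (by norm_num)
    _ = Mk := by ring
  · refine Filter.Eventually.of_forall fun ω => fun x _ => ?_
    rw [Real.norm_eq_abs, abs_mul, abs_pow]
    calc |c ω| ^ (k+1) * |gg ℓ (k+1) (x * c ω)| ≤ 1 ^ (k+1) * M := by
          apply mul_le_mul (pow_le_pow_left₀ (abs_nonneg _) (sphere_coord_le n hn ω) _)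
            (hM _) (abs_nonneg _) (by norm_num)
    _ = M := by ring
  · refine Filter.Eventually.of_forall fun ω => fun x _ => ?_
    have h1 : HasDerivAt (fun y : ℝ => y * c ω) (c ω) x := hasDerivAt_mul_const (c ω)
    have h2 := ((gg_hasDerivAt ℓ (k+1-1) (x * c ω)).comp x h1).const_mul (c ω ^ k)
    simp only [Nat.add_sub_cancel] at h2
    exact h2.congr_deriv (by ring)



lemma Tk_zero (n : ℕ) (hn : 0 < n) (ℓ : ℕ) (ρ : ℝ) :
    Tk n hn ℓ 0 ρ = ∫ ω : Metric.sphere (0 : EuclideanSpace ℝ (Fin n)) 1,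
      Real.sin (ρ * (ω : EuclideanSpace ℝ (Fin n)) ⟨0, hn⟩) ^ ℓ ∂(σm n) := by
  unfold Tk gg
  simp [iteratedDeriv_zero]


lemma Tk_cont (n : ℕ) (hn : 0 < n) (ℓ k : ℕ) : Continuous (Tk n hn ℓ k) :=
  continuous_iff_continuousAt.2 fun s => (Tk_hasDerivAt n hn ℓ k s).continuousAt

lemma Tk_nonneg (n : ℕ) (hn : 0 < n) (ℓ : ℕ) (he : Even ℓ) (ρ : ℝ) :
    0 ≤ Tk n hn ℓ 0 ρ := by
  rw [Tk_zero]
  exact integral_nonneg fun ω => he.pow_nonneg _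

lemma W_polar (n : ℕ) (hn : 0 < n) (ℓ : ℕ) (he : Even ℓ) (α : ℝ) (hα : 0 < α)
    (r : ℝ) (hr : 0 < r) :
    W n hn ℓ α r = ∫ ρ in Ioi r, ρ ^ (-(1+α)) * Tk n hn ℓ 0 ρ := by
  classical
  haveI : Nonempty (Fin n) := ⟨⟨0, hn⟩⟩
  set E := EuclideanSpace ℝ (Fin n)
  haveI : Nontrivial E := by
    refine ⟨EuclideanSpace.single ⟨0, hn⟩ 1, 0, ?_⟩
    intro h
    have := congrArg (fun v : E => v ⟨0, hn⟩) h
    rw [EuclideanSpace.single_apply] at this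
    exact one_ne_zero (α := ℝ) (by simpa using this)
  set q : ℝ := (n : ℝ) + α with hq
  have hq0 : 0 < q := by positivity
  set c : E → ℝ := fun y => y ⟨0, hn⟩ with hc
  have ccont : Continuous c := (EuclideanSpace.proj (⟨0, hn⟩ : Fin n)).continuous
  set G : E → ℝ := fun y => Real.sin (c y) ^ ℓ / ‖y‖ ^ q with hG
  have Gmeas : Measurable G := by
    apply Measurable.div
    · exact ((Real.continuous_sin.comp ccont).pow ℓ).measurable
    · have : Continuous fun x : ℝ => x ^ q :=
        continuous_iff_continuousAt.2 fun x => Real.continuousAt_rpow_const x q (Or.inr hq0.le)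
      exact (this.comp continuous_norm).measurable
  have Gnn : ∀ y, 0 ≤ G y := fun y =>
    div_nonneg (he.pow_nonneg _) (Real.rpow_nonneg (norm_nonneg _) _)
  set S : Set E := {y | r < ‖y‖} with hS
  have hSm : MeasurableSet S := (isOpen_lt continuous_const continuous_norm).measurableSet
  set F : E → ℝ := S.indicator G with hF
  have Fmeas : Measurable F := Gmeas.indicator hSm
  have Fnn : ∀ y, 0 ≤ F y := fun y => Set.indicator_nonneg (fun y _ => Gnn y) y
  -- Step A: W as lintegral
  have stepA : W n hn ℓ α r = (∫⁻ y, ENNReal.ofReal (F y)).toReal := by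
    rw [W, ← integral_indicator hSm]
    rw [integral_eq_lintegral_of_nonneg_ae (Filter.Eventually.of_forall Fnn)
      Fmeas.aestronglyMeasurable]
  -- the main lintegral computation
  set T : ℝ → ℝ := Tk n hn ℓ 0 with hT
  have Tcont : Continuous T := Tk_cont n hn ℓ 0
  have Tnn : ∀ ρ, 0 ≤ T ρ := Tk_nonneg n hn ℓ he
  set φ : ℝ → ℝ := fun ρ => ρ ^ (-(1+α)) * T ρ with hφ
  have key : (∫⁻ y, ENNReal.ofReal (F y)) =
      ∫⁻ ρ in Ioi r, ENNReal.ofReal (φ ρ) := by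
    have h0c : MeasurableSet ({(0:E)}ᶜ : Set E) := (measurableSet_singleton 0).compl
    set hfun : Metric.sphere (0:E) 1 × Ioi (0:ℝ) → ℝ≥0∞ :=
      fun p => ENNReal.ofReal (F ((p.2 : ℝ) • (p.1 : E))) with hhfun
    have hsmul : Continuous fun p : Metric.sphere (0:E) 1 × Ioi (0:ℝ) => (p.2 : ℝ) • (p.1 : E) :=
      (continuous_subtype_val.comp continuous_snd).smul (continuous_subtype_val.comp continuous_fst)
    have hfmeas : Measurable hfun := ENNReal.measurable_ofReal.comp (Fmeas.comp hsmul.measurable)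
    set g : ℝ → ℝ≥0∞ :=
      (Ioi r).indicator (fun t => ENNReal.ofReal (T t / t ^ q)) with hg2
    have inner : ∀ y : Ioi (0:ℝ),
        (∫⁻ ω, hfun (ω, y) ∂(volume : Measure E).toSphere) = g (y : ℝ) := by
      intro y
      have hy : (0:ℝ) < y := y.2
      have hFsm : ∀ ω : Metric.sphere (0:E) 1, F ((y:ℝ) • (ω:E)) =
          if r < (y:ℝ) then Real.sin ((y:ℝ) * c (ω:E)) ^ ℓ / (y:ℝ) ^ q else 0 := by
        intro ω
        have hnrm : ‖(y:ℝ) • (ω:E)‖ = (y:ℝ) := by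
          rw [norm_smul, mem_sphere_zero_iff_norm.1 ω.2, Real.norm_eq_abs, abs_of_pos hy, mul_one]
        have hmem : ((y:ℝ) • (ω:E) ∈ S) ↔ r < (y:ℝ) := by rw [hS]; simp [hnrm]
        have hcs : c ((y:ℝ) • (ω:E)) = (y:ℝ) * c (ω:E) := rfl
        by_cases hcase : r < (y:ℝ)
        · rw [if_pos hcase, hF, Set.indicator_of_mem (hmem.2 hcase)]
          show Real.sin (c ((y:ℝ) • (ω:E))) ^ ℓ / ‖(y:ℝ) • (ω:E)‖ ^ q = _
          rw [hnrm, hcs]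
        · rw [if_neg hcase, hF, Set.indicator_of_notMem (fun h => hcase (hmem.1 h))]
      by_cases hcase : r < (y:ℝ)
      · have hint : Integrable (fun ω : Metric.sphere (0:E) 1 =>
            Real.sin ((y:ℝ) * c (ω:E)) ^ ℓ / (y:ℝ) ^ q) (σm n) := by
          have hco : Continuous fun ω : Metric.sphere (0:E) 1 =>
              Real.sin ((y:ℝ) * c (ω:E)) ^ ℓ / (y:ℝ) ^ q :=
            ((Real.continuous_sin.comp
              (continuous_const.mul (ccont.comp continuous_subtype_val))).pow ℓ).div_const _
          refine (integrable_const ((1:ℝ) / (y:ℝ) ^ q)).mono' hco.aestronglyMeasurable ?_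
          refine Filter.Eventually.of_forall fun ω => ?_
          have hyq : (0:ℝ) < (y:ℝ) ^ q := Real.rpow_pos_of_pos hy q
          rw [Real.norm_eq_abs, abs_div, abs_of_pos hyq]
          gcongr
          rw [abs_pow]
          exact pow_le_one₀ (abs_nonneg _) (Real.abs_sin_le_one _)
        have hnn2 : 0 ≤ᵐ[σm n] fun ω : Metric.sphere (0:E) 1 =>
            Real.sin ((y:ℝ) * c (ω:E)) ^ ℓ / (y:ℝ) ^ q :=
          Filter.Eventually.of_forall fun ω =>
            div_nonneg (he.pow_nonneg _) (Real.rpow_nonneg hy.le _)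
        calc (∫⁻ ω, hfun (ω, y) ∂(volume : Measure E).toSphere)
            = ∫⁻ ω, ENNReal.ofReal (Real.sin ((y:ℝ) * c (ω:E)) ^ ℓ / (y:ℝ) ^ q)
              ∂(σm n) := lintegral_congr fun ω => by
                show ENNReal.ofReal (F ((y:ℝ) • (ω:E))) = _
                rw [hFsm ω, if_pos hcase]
        _ = ENNReal.ofReal (∫ ω : Metric.sphere (0:E) 1,
              Real.sin ((y:ℝ) * c (ω:E)) ^ ℓ / (y:ℝ) ^ q ∂(σm n)) :=
            (ofReal_integral_eq_lintegral_ofReal hint hnn2).symm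
        _ = g (y:ℝ) := by
            rw [hg2, Set.indicator_of_mem (mem_Ioi.2 hcase)]
            congr 1
            rw [integral_div, hT, Tk_zero]
      · calc (∫⁻ ω, hfun (ω, y) ∂(volume : Measure E).toSphere)
            = ∫⁻ _ω : Metric.sphere (0:E) 1, 0 ∂(σm n) :=
              lintegral_congr fun ω => by
                show ENNReal.ofReal (F ((y:ℝ) • (ω:E))) = _
                rw [hFsm ω, if_neg hcase]; simp
        _ = 0 := lintegral_zero
        _ = g (y:ℝ) := by rw [hg2, Set.indicator_of_notMem (fun h => hcase (mem_Ioi.1 h))]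
    have gmeas : Measurable g := by
      have hrpc : Continuous fun t : ℝ => t ^ q :=
        continuous_iff_continuousAt.2 fun x => Real.continuousAt_rpow_const x q (Or.inr hq0.le)
      exact (ENNReal.measurable_ofReal.comp
        ((Tcont.measurable).div hrpc.measurable)).indicator measurableSet_Ioi
    calc (∫⁻ y, ENNReal.ofReal (F y))
        = ∫⁻ y in {(0:E)}ᶜ, ENNReal.ofReal (F y) := by
          rw [restrict_compl_singleton]
      _ = ∫⁻ x : ({(0:E)}ᶜ : Set E), ENNReal.ofReal (F x)
            ∂((volume : Measure E).comap Subtype.val) :=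
          (lintegral_subtype_comap h0c _).symm
      _ = ∫⁻ p, hfun p ∂((volume : Measure E).toSphere.prod
            (.volumeIoiPow (Module.finrank ℝ E - 1))) := by
          rw [← (volume : Measure E).measurePreserving_homeomorphUnitSphereProd.lintegral_comp_emb
            (Homeomorph.measurableEmbedding _) hfun]
          refine lintegral_congr fun x => ?_
          have h3 := congrArg Subtype.val ((homeomorphUnitSphereProd E).symm_apply_apply x)
          rw [homeomorphUnitSphereProd_symm_apply_coe] at h3
          rw [hhfun]
          simp only [h3]
      _ = ∫⁻ y : Ioi (0:ℝ), (∫⁻ ω, hfun (ω, y) ∂(volume : Measure E).toSphere)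
            ∂(Measure.volumeIoiPow (Module.finrank ℝ E - 1)) :=
          lintegral_prod_symm hfun hfmeas.aemeasurable
      _ = ∫⁻ y : Ioi (0:ℝ), g (y:ℝ) ∂(Measure.volumeIoiPow (n - 1)) := by
          rw [show Module.finrank ℝ E = n from finrank_euclideanSpace_fin]
          exact lintegral_congr inner
      _ = ∫⁻ y in Ioi (0:ℝ), ENNReal.ofReal (y ^ (n-1)) * g y := by
          have hdmeas : Measurable fun ρ : Ioi (0:ℝ) => ENNReal.ofReal ((ρ:ℝ) ^ (n-1)) :=
            ENNReal.measurable_ofReal.comp ((continuous_subtype_val.pow (n-1)).measurable)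
          have hgmeas2 : Measurable fun ρ : Ioi (0:ℝ) => g (ρ:ℝ) :=
            gmeas.comp measurable_subtype_coe
          rw [Measure.volumeIoiPow,
            lintegral_withDensity_eq_lintegral_mul _ hdmeas hgmeas2,
            ← lintegral_subtype_comap measurableSet_Ioi
              (fun t : ℝ => ENNReal.ofReal (t ^ (n-1)) * g t)]
          exact lintegral_congr fun ρ => rfl
      _ = ∫⁻ y in Ioi (0:ℝ),
            (Ioi r).indicator (fun t => ENNReal.ofReal (t ^ (-(1+α)) * T t)) y := by
          refine setLIntegral_congr_fun measurableSet_Ioi (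
            fun y hy => ?_)
          have hy0 : (0:ℝ) < y := hy
          by_cases hyr : y ∈ Ioi r
          · rw [hg2, Set.indicator_of_mem hyr, Set.indicator_of_mem hyr,
              ← ENNReal.ofReal_mul (pow_nonneg hy0.le _)]
            congr 1
            have hexp : y ^ ((n:ℝ)-1) / y ^ q = y ^ (-(1+α)) := by
              rw [← Real.rpow_sub hy0]
              congr 1
              rw [hq]; ring
            have hcast : (y : ℝ) ^ ((n-1 : ℕ) : ℝ) = y ^ (n-1 : ℕ) := Real.rpow_natCast y (n-1)
            have hcast2 : ((n-1 : ℕ) : ℝ) = (n:ℝ) - 1 := by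
              rw [Nat.cast_sub hn]; norm_num
            calc y ^ (n-1:ℕ) * (T y / y ^ q) = (y ^ ((n:ℝ)-1) / y ^ q) * T y := by
                  rw [← hcast, hcast2]; ring
            _ = y ^ (-(1+α)) * T y := by rw [hexp]
          · rw [hg2, Set.indicator_of_notMem hyr, Set.indicator_of_notMem hyr, mul_zero]
      _ = ∫⁻ ρ in Ioi r, ENNReal.ofReal (φ ρ) := by
          rw [lintegral_indicator measurableSet_Ioi, Measure.restrict_restrict measurableSet_Ioi,
            inter_eq_left.2 (Ioi_subset_Ioi hr.le)]
  rw [stepA, key]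
  rw [integral_eq_lintegral_of_nonneg_ae ?nn ?ms]
  case nn =>
    filter_upwards [ae_restrict_mem measurableSet_Ioi] with y hy
    exact mul_nonneg (Real.rpow_nonneg (le_of_lt (hr.trans hy)) _) (Tnn y)
  case ms =>
    have hcont : ContinuousOn (fun x : ℝ => x ^ (-(1+α)) * T x) (Ioi r) := fun x hx =>
      (((Real.continuousAt_rpow_const x _ (Or.inl (ne_of_gt (hr.trans hx)))).mul
        Tcont.continuousAt)).continuousWithinAt
    exact hcont.aestronglyMeasurable measurableSet_Ioi


lemma Tk_bound (n : ℕ) (hn : 0 < n) (ℓ k : ℕ) :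
    ∃ A : ℝ, 0 ≤ A ∧ ∀ ρ, |Tk n hn ℓ k ρ| ≤ A := by
  obtain ⟨M, hM0, hM⟩ := gg_bound ℓ k
  refine ⟨M * ((σm n) Set.univ).toReal, by positivity, fun ρ => ?_⟩
  rw [← Real.norm_eq_abs]
  apply norm_integral_le_of_norm_le_const
  refine Filter.Eventually.of_forall fun ω => ?_
  rw [Real.norm_eq_abs, abs_mul, abs_pow]
  calc |(ω : EuclideanSpace ℝ (Fin n)) ⟨0, hn⟩| ^ k *
      |gg ℓ k (ρ * (ω : EuclideanSpace ℝ (Fin n)) ⟨0, hn⟩)| ≤ 1 ^ k * M :=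
        mul_le_mul (pow_le_pow_left₀ (abs_nonneg _) (sphere_coord_le n hn ω) k) (hM _)
          (abs_nonneg _) (by norm_num)
  _ = M := by ring

lemma phi_contOn (n : ℕ) (hn : 0 < n) (ℓ : ℕ) (α : ℝ) :
    ContinuousOn (fun ρ : ℝ => ρ ^ (-(1+α)) * Tk n hn ℓ 0 ρ) (Ioi 0) := fun x hx =>
  ((Real.continuousAt_rpow_const x _ (Or.inl (ne_of_gt hx))).mul
    (Tk_cont n hn ℓ 0).continuousAt).continuousWithinAt

lemma phi_integrableOn (n : ℕ) (hn : 0 < n) (ℓ : ℕ) (α : ℝ) (hα : 0 < α)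
    {a : ℝ} (ha : 0 < a) :
    IntegrableOn (fun ρ : ℝ => ρ ^ (-(1+α)) * Tk n hn ℓ 0 ρ) (Ioi a) := by
  obtain ⟨A, hA0, hA⟩ := Tk_bound n hn ℓ 0
  have base : IntegrableOn (fun ρ : ℝ => ρ ^ (-(1+α))) (Ioi a) :=
    integrableOn_Ioi_rpow_of_lt (by linarith) ha
  refine (base.mul_const A).mono' (((phi_contOn n hn ℓ α).mono
    (Ioi_subset_Ioi ha.le)).aestronglyMeasurable measurableSet_Ioi) ?_
  filter_upwards [ae_restrict_mem measurableSet_Ioi] with ρ hρ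
  have hρ0 : (0:ℝ) < ρ := ha.trans hρ
  rw [Real.norm_eq_abs, abs_mul, abs_of_pos (Real.rpow_pos_of_pos hρ0 _)]
  exact mul_le_mul_of_nonneg_left (hA ρ) (Real.rpow_nonneg hρ0.le _)

lemma W_hasDerivAt (n : ℕ) (hn : 0 < n) (ℓ : ℕ) (he : Even ℓ) (α : ℝ) (hα : 0 < α)
    (r : ℝ) (hr : 0 < r) :
    HasDerivAt (W n hn ℓ α) (-(r ^ (-(1+α)) * Tk n hn ℓ 0 r)) r := by
  set φ : ℝ → ℝ := fun ρ => ρ ^ (-(1+α)) * Tk n hn ℓ 0 ρ with hφ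
  set a : ℝ := r / 2 with ha
  have ha0 : 0 < a := by positivity
  have har : a < r := by rw [ha]; linarith
  have hIoi : IntegrableOn φ (Ioi a) := phi_integrableOn n hn ℓ α hα ha0
  have heq : ∀ s ∈ Ioi a, W n hn ℓ α s = (∫ ρ in Ioi a, φ ρ) - ∫ ρ in a..s, φ ρ := by
    intro s hs
    have hs0 : 0 < s := ha0.trans hs
    have hsplit : (∫ ρ in Ioc a s, φ ρ) + ∫ ρ in Ioi s, φ ρ = ∫ ρ in Ioi a, φ ρ := by
      rw [← setIntegral_union Ioc_disjoint_Ioi_same measurableSet_Ioi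
        (hIoi.mono_set Ioc_subset_Ioi_self) (hIoi.mono_set (Ioi_subset_Ioi (le_of_lt hs)))]
      rw [Ioc_union_Ioi_eq_Ioi (le_of_lt hs)]
    rw [W_polar n hn ℓ he α hα s hs0, intervalIntegral.integral_of_le (le_of_lt hs),
      ← hsplit]
    ring
  have hmem : Ioi a ∈ nhds r := isOpen_Ioi.mem_nhds har
  have hftc : HasDerivAt (fun s => (∫ ρ in Ioi a, φ ρ) - ∫ ρ in a..s, φ ρ) (-(φ r)) r := by
    have h1 : IntervalIntegrable φ volume a r := by
      apply ContinuousOn.intervalIntegrable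
      apply (phi_contOn n hn ℓ α).mono
      rw [uIcc_of_le har.le]
      intro x hx
      exact lt_of_lt_of_le ha0 hx.1
    have h2 : StronglyMeasurableAtFilter φ (nhds r) volume :=
      ⟨Ioi (0:ℝ), Ioi_mem_nhds hr,
        (phi_contOn n hn ℓ α).aestronglyMeasurable measurableSet_Ioi⟩
    have h3 : ContinuousAt φ r :=
      (Real.continuousAt_rpow_const r _ (Or.inl (ne_of_gt hr))).mul
        (Tk_cont n hn ℓ 0).continuousAt
    exact (intervalIntegral.integral_hasDerivAt_right h1 h2 h3).const_sub _
  refine hftc.congr_of_eventuallyEq ?_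
  filter_upwards [hmem] with s hs
  exact heq s hs
lemma rW_bound (n : ℕ) (hn : 0 < n) (ℓ : ℕ) (he : Even ℓ) (α : ℝ) (hα : 0 < α) :
    ∃ A : ℝ, 0 ≤ A ∧ ∀ r : ℝ, 0 < r → |r ^ α * W n hn ℓ α r| ≤ A := by
  obtain ⟨A0, hA00, hA0⟩ := Tk_bound n hn ℓ 0
  refine ⟨A0 / α, by positivity, fun r hr => ?_⟩
  have hW : |W n hn ℓ α r| ≤ A0 / α * r ^ (-α) := by
    rw [W_polar n hn ℓ he α hα r hr, ← Real.norm_eq_abs]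
    calc ‖∫ ρ in Ioi r, ρ ^ (-(1+α)) * Tk n hn ℓ 0 ρ‖
        ≤ ∫ ρ in Ioi r, ‖ρ ^ (-(1+α)) * Tk n hn ℓ 0 ρ‖ := norm_integral_le_integral_norm _
    _ ≤ ∫ ρ in Ioi r, ρ ^ (-(1+α)) * A0 := by
        apply setIntegral_mono_on (phi_integrableOn n hn ℓ α hα hr).norm
          ((integrableOn_Ioi_rpow_of_lt (by linarith) hr).mul_const A0) measurableSet_Ioi
        intro ρ hρ
        have hρ0 : (0:ℝ) < ρ := hr.trans hρ
        rw [Real.norm_eq_abs, abs_mul, abs_of_pos (Real.rpow_pos_of_pos hρ0 _)]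
        exact mul_le_mul_of_nonneg_left (hA0 ρ) (Real.rpow_nonneg hρ0.le _)
    _ = A0 / α * r ^ (-α) := by
        rw [MeasureTheory.integral_mul_const, integral_Ioi_rpow_of_lt (by linarith) hr]
        rw [show -(1+α) + 1 = -α by ring]
        rw [neg_div_neg_eq]
        ring
  have hrα : (0:ℝ) < r ^ α := Real.rpow_pos_of_pos hr α
  rw [abs_mul, abs_of_pos hrα]
  calc r ^ α * |W n hn ℓ α r| ≤ r ^ α * (A0 / α * r ^ (-α)) :=
        mul_le_mul_of_nonneg_left hW hrα.le
  _ = A0 / α * (r ^ α * r ^ (-α)) := by ring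
  _ = A0 / α := by
      rw [← Real.rpow_add hr, add_neg_cancel, Real.rpow_zero, mul_one]

/-- For `n ≥ 1`, `ℓ` a positive even integer and `0 < α < ℓ`, there is a constant `C` with
`|r^k (d/dr)^k (r^α W(r))| ≤ C` for all `0 < r ≤ 1` and all `k = 0, 1, …, n`. -/
theorem stmt_15 (n : ℕ) (hn : 0 < n) (ℓ : ℕ) (hℓ : 0 < ℓ) (he : Even ℓ)
    (α : ℝ) (hα : 0 < α) (hαℓ : α < ℓ) :
    ∃ C : ℝ, ∀ r : ℝ, 0 < r → r ≤ 1 → ∀ k ≤ n,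
      |r ^ k * iteratedDeriv k (fun s : ℝ => s ^ α * W n hn ℓ α s) r| ≤ C := by
  set F : ℝ → ℝ := fun s => s ^ α * W n hn ℓ α s with hF
  have main : ∀ k : ℕ, ∀ r : ℝ, 0 < r →
      HasDerivAt (iteratedDeriv k F) (iteratedDeriv (k+1) F r) r ∧
      r * iteratedDeriv (k+1) F r = (α - k) * iteratedDeriv k F r - Tk n hn ℓ k r := by
    intro k
    induction k with
    | zero =>
      intro r hr
      have hW := W_hasDerivAt n hn ℓ he α hα r hr
      have hP : HasDerivAt (fun s : ℝ => s ^ α) (α * r ^ (α-1)) r :=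
        Real.hasDerivAt_rpow_const (Or.inl hr.ne')
      have hFd : HasDerivAt F
          (α * r ^ (α-1) * W n hn ℓ α r + r ^ α * -(r ^ (-(1+α)) * Tk n hn ℓ 0 r)) r :=
        hP.mul hW
      have hD1 : iteratedDeriv 1 F r =
          α * r ^ (α-1) * W n hn ℓ α r + r ^ α * -(r ^ (-(1+α)) * Tk n hn ℓ 0 r) := by
        rw [iteratedDeriv_one, hFd.deriv]
      have h1 : r * r ^ (α-1) = r ^ α := by
        have h := Real.rpow_add hr 1 (α-1)
        rw [Real.rpow_one] at h
        rw [← h]; congr 1; ring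
      have h2 : r * (r ^ α * r ^ (-(1+α))) = 1 := by
        have h := Real.rpow_add hr α (-(1+α))
        rw [← h, show α + -(1+α) = -1 by ring, Real.rpow_neg_one]
        exact mul_inv_cancel₀ hr.ne'
      constructor
      · rw [← hD1] at hFd
        simpa [iteratedDeriv_zero] using hFd
      · rw [hD1, iteratedDeriv_zero]
        simp only [Nat.cast_zero, sub_zero, hF]
        linear_combination (α * W n hn ℓ α r) * h1 - Tk n hn ℓ 0 r * h2
    | succ k ih =>
      intro r hr
      have hDk1eq : ∀ s, 0 < s → iteratedDeriv (k+1) F s =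
          ((α - k) * iteratedDeriv k F s - Tk n hn ℓ k s) / s := by
        intro s hs
        rw [eq_div_iff hs.ne', mul_comm _ s, (ih s hs).2]
      have hh : HasDerivAt
          (fun s => ((α - k) * iteratedDeriv k F s - Tk n hn ℓ k s) / s)
          ((((α - k) * iteratedDeriv (k+1) F r - Tk n hn ℓ (k+1) r) * r -
            ((α - k) * iteratedDeriv k F r - Tk n hn ℓ k r) * 1) / r ^ 2) r := by
        exact HasDerivAt.div (((ih r hr).1.const_mul (α - k)).sub (Tk_hasDerivAt n hn ℓ k r))
          (hasDerivAt_id r) hr.ne'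
      have heq2 : iteratedDeriv (k+1) F =ᶠ[nhds r]
          fun s => ((α - k) * iteratedDeriv k F s - Tk n hn ℓ k s) / s := by
        filter_upwards [Ioi_mem_nhds hr] with s hs
        exact hDk1eq s hs
      have hd2 : HasDerivAt (iteratedDeriv (k+1) F)
          ((((α - k) * iteratedDeriv (k+1) F r - Tk n hn ℓ (k+1) r) * r -
            ((α - k) * iteratedDeriv k F r - Tk n hn ℓ k r) * 1) / r ^ 2) r :=
        hh.congr_of_eventuallyEq heq2
      have hD2 : iteratedDeriv (k+2) F r =
          (((α - k) * iteratedDeriv (k+1) F r - Tk n hn ℓ (k+1) r) * r -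
            ((α - k) * iteratedDeriv k F r - Tk n hn ℓ k r) * 1) / r ^ 2 := by
        rw [iteratedDeriv_succ, hd2.deriv]
      constructor
      · rw [← hD2] at hd2
        exact hd2
      · rw [hD2, ← (ih r hr).2]
        have hr2 : (r:ℝ) ^ 2 ≠ 0 := pow_ne_zero 2 hr.ne'
        field_simp
        push_cast
        ring
  -- bounds
  obtain ⟨A, hA0, hA⟩ := rW_bound n hn ℓ he α hα
  have bound : ∀ k : ℕ, ∃ B : ℝ, 0 ≤ B ∧ ∀ r : ℝ, 0 < r → r ≤ 1 →
      |r ^ k * iteratedDeriv k F r| ≤ B := by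
    intro k
    induction k with
    | zero =>
      exact ⟨A, hA0, fun r hr _ => by
        simpa [iteratedDeriv_zero, hF] using hA r hr⟩
    | succ k ih =>
      obtain ⟨B, hB0, hB⟩ := ih
      obtain ⟨Ak, hAk0, hAk⟩ := Tk_bound n hn ℓ k
      refine ⟨(|α| + k) * B + Ak, by positivity, fun r hr hr1 => ?_⟩
      have hrk : |r ^ k| ≤ 1 := by
        rw [abs_of_pos (pow_pos hr k)]
        exact pow_le_one₀ hr.le hr1
      have key : r ^ (k+1) * iteratedDeriv (k+1) F r =
          (α - k) * (r ^ k * iteratedDeriv k F r) - r ^ k * Tk n hn ℓ k r := by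
        have := (main k r hr).2
        calc r ^ (k+1) * iteratedDeriv (k+1) F r
            = r ^ k * (r * iteratedDeriv (k+1) F r) := by ring
        _ = r ^ k * ((α - k) * iteratedDeriv k F r - Tk n hn ℓ k r) := by rw [this]
        _ = (α - k) * (r ^ k * iteratedDeriv k F r) - r ^ k * Tk n hn ℓ k r := by ring
      rw [key]
      calc |(α - k) * (r ^ k * iteratedDeriv k F r) - r ^ k * Tk n hn ℓ k r|
          ≤ |(α - k) * (r ^ k * iteratedDeriv k F r)| + |r ^ k * Tk n hn ℓ k r| :=
            abs_sub _ _
      _ ≤ (|α| + k) * B + 1 * Ak := by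
          apply add_le_add
          · rw [abs_mul]
            apply mul_le_mul ?_ (hB r hr hr1) (abs_nonneg _) (by positivity)
            calc |α - (k:ℝ)| ≤ |α| + |(k:ℝ)| := abs_sub _ _
            _ = |α| + k := by rw [Nat.abs_cast]
          · rw [abs_mul]
            exact mul_le_mul hrk (hAk r) (abs_nonneg _) zero_le_one
      _ = (|α| + k) * B + Ak := by ring
  choose B hB0 hB using bound
  refine ⟨∑ k ∈ Finset.range (n+1), B k, fun r hr hr1 k hk => ?_⟩
  calc |r ^ k * iteratedDeriv k F r| ≤ B k := hB k r hr hr1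
  _ ≤ ∑ j ∈ Finset.range (n+1), B j :=
      Finset.single_le_sum (fun j _ => hB0 j) (Finset.mem_range.2 (Nat.lt_succ_of_le hk))
end
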